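/- arXiv:1605.01708 — 2 statements merged into one kernel-verified Lean document; each statement's English description precedes it below -/
import Mathlib

section
/- Let S = {i₁ < i₂ < ⋯ < i_s} be an (n+1)-admissible set and let q ≥ max(S). Define S_{i_ℓ} = {i₁,...,i_{ℓ-1}, i_ℓ - 1, i_{ℓ+1} - 1, ..., i_s - 1} and Ŝ_{i_ℓ} = {i₁,...,i_{ℓ-1}, i_{ℓ+1} - 1, ..., i_s - 1} (with i_ℓ omitted). Then |P_S(q+1)| = 2|P_S(q)| + 2·Σ_{ℓ=1}^{s} |P_{S_{i_ℓ}}(q)| + Σ_{ℓ=1}^{s} |P_{Ŝ_{i_ℓ}}(q)|. -/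
/-- The peak set (1-based indices) of a list: `i` is a peak if `1 < i < length`
and the `(i-1)`-st entry is less than the `i`-th, which is greater than the `(i+1)`-st. -/
def peaks (l : List ℕ) : Finset ℕ :=
  (Finset.Icc 2 (l.length - 1)).filter (fun i =>
    l.getD (i - 2) 0 < l.getD (i - 1) 0 ∧ l.getD i 0 < l.getD (i - 1) 0)

/-- `l` is (the one-line notation of) a permutation of `{1,...,n}`. -/
def IsPermOf (n : ℕ) (l : List ℕ) : Prop := l.Perm (List.range' 1 n)

/-- The number of permutations of `{1,...,n}` with peak set exactly `S`. -/
noncomputable def numPerms (n : ℕ) (S : Finset ℕ) : ℕ :=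
  {l : List ℕ | IsPermOf n l ∧ peaks l = S}.ncard

/-- `S` is `n`-admissible: some permutation of `{1,...,n}` has peak set exactly `S`. -/
def Admissible (n : ℕ) (S : Finset ℕ) : Prop :=
  ∃ l : List ℕ, IsPermOf n l ∧ peaks l = S

/-- `S_{i}`: keep the elements of `S` below `i`, and decrease `i` and every larger element by 1. -/
def Sdown (S : Finset ℕ) (i : ℕ) : Finset ℕ :=
  S.filter (· < i) ∪ (S.filter (i ≤ ·)).image (· - 1)

/-- `Ŝ_{i}`: keep the elements of `S` below `i`, omit `i`, and decrease every larger element by 1. -/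
def Shat (S : Finset ℕ) (i : ℕ) : Finset ℕ :=
  S.filter (· < i) ∪ (S.filter (i < ·)).image (· - 1)

/-! Delete the largest entry `q + 1` from a permutation of `{1, …, q + 1}` with peak set `S`.
If it stood first, what is left has peak set `Sdown S 0 = S - 1`; if it stood last, peak set `S`.
If it stood at an inner position, it was a peak `p ∈ S`, and what is left has peak set `Shat S p`
together with at most one of the two positions `p - 1`, `p` it straddled, i.e. `Shat S p`,
`Sdown S p` or `Sdown S (p + 1)`. As `Sdown S k` depends only on `S.filter (· < k)`, the sum of
the last terms over `p ∈ S` telescopes against `∑ p ∈ S, |P_{Sdown S p}(q)|`, trading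
`|P_{Sdown S 0}(q)|` for `|P_S(q)|`. -/

open Finset

namespace List

variable {α : Type*} {a : α} {l : List α} {j : ℕ}

theorem getD_insertIdx (hj : j ≤ l.length) (k : ℕ) (d : α) :
    (l.insertIdx j a).getD k d =
      if k < j then l.getD k d else if k = j then a else l.getD (k - 1) d := by
  simp only [getD_eq_getElem?_getD, getElem?_insertIdx]
  split_ifs <;> first | rfl | omega

variable [DecidableEq α]

theorem idxOf_insertIdx_of_notMem (ha : a ∉ l) (hj : j ≤ l.length) :
    (l.insertIdx j a).idxOf a = j := by
  induction l generalizing j with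
  | nil => simp_all
  | cons b l ih =>
    cases j with
    | zero => simp
    | succ j =>
      simp only [mem_cons, not_or] at ha
      rw [insertIdx_succ_cons, idxOf_cons_ne _ (Ne.symm ha.1), ih ha.2 (by simpa using hj)]

theorem erase_insertIdx_of_notMem (ha : a ∉ l) (hj : j ≤ l.length) :
    (l.insertIdx j a).erase a = l := by
  rw [← eraseIdx_idxOf_eq_erase, idxOf_insertIdx_of_notMem ha hj, eraseIdx_insertIdx_self]

theorem insertIdx_idxOf_erase (ha : a ∈ l) : (l.erase a).insertIdx (l.idxOf a) a = l := by
  rw [← eraseIdx_idxOf_eq_erase]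
  conv_rhs => rw [← insertIdx_eraseIdx_getElem (idxOf_lt_length_of_mem ha)]
  rw [getElem_idxOf]

end List

theorem card_filter_permutations_cons {α : Type*} [DecidableEq α] {a : α} {L : List α}
    (ha : a ∉ L) (P : List α → Prop) [DecidablePred P] :
    #{σ ∈ (a :: L).permutations.toFinset | P σ} =
      ∑ j ∈ range (L.length + 1), #{τ ∈ L.permutations.toFinset | P (τ.insertIdx j a)} := by
  rw [← card_sigma]
  refine card_nbij' (fun σ => ⟨σ.idxOf a, σ.erase a⟩) (fun p => p.2.insertIdx p.1 a)
    ?_ ?_ ?_ ?_ <;>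
  simp only [Set.MapsTo, Set.LeftInvOn, Set.RightInvOn, mem_coe, mem_filter, mem_sigma,
    mem_range, List.mem_toFinset, List.mem_permutations, Sigma.forall, and_imp]
  · intro σ hσ hP
    have haσ : a ∈ σ := hσ.mem_iff.2 List.mem_cons_self
    refine ⟨by simpa [hσ.length_eq] using List.idxOf_lt_length_of_mem haσ,
      by simpa using hσ.erase a, ?_⟩
    rwa [List.insertIdx_idxOf_erase haσ]
  · intro j τ hj hτ hP
    exact ⟨(List.perm_insertIdx a τ (by simpa [hτ.length_eq] using hj)).trans (hτ.cons a), hP⟩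
  · intro σ hσ _
    exact List.insertIdx_idxOf_erase (hσ.mem_iff.2 List.mem_cons_self)
  · intro j τ hj hτ _
    have haτ : a ∉ τ := fun h => ha (hτ.mem_iff.1 h)
    have hj' : j ≤ τ.length := by simpa [hτ.length_eq] using hj
    simp [List.idxOf_insertIdx_of_notMem haτ hj', List.erase_insertIdx_of_notMem haτ hj']

namespace Finset

theorem card_filter_sdiff_eq {ι α : Type*} [DecidableEq α] (s : Finset ι)
    (f : ι → Finset α) {B D : Finset α} (h : Disjoint B D) :
    #{x ∈ s | f x \ D = B} = ∑ C ∈ D.powerset, #{x ∈ s | f x = B ∪ C} := by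
  rw [card_eq_sum_card_fiberwise (f := fun x => f x ∩ D) (t := D.powerset) (fun x _ => by simp)]
  refine sum_congr rfl fun C hC => ?_
  rw [mem_powerset] at hC
  rw [filter_filter]
  refine congrArg card (filter_congr fun x _ => ⟨?_, fun hx => ?_⟩)
  · rintro ⟨hB, hC'⟩
    rw [← hB, ← hC', sdiff_union_inter]
  · rw [hx, union_sdiff_distrib, sdiff_eq_self_of_disjoint h, sdiff_eq_empty_iff_subset.2 hC,
      union_empty, union_inter_distrib_right, disjoint_iff_inter_eq_empty.1 h, empty_union,
      inter_eq_left.2 hC]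
    exact ⟨rfl, rfl⟩

theorem sum_powerset_pair {α M : Type*} [DecidableEq α] [AddCommMonoid M] {a b : α}
    (hab : a ≠ b) (f : Finset α → M) :
    ∑ t ∈ ({a, b} : Finset α).powerset, f t = f ∅ + f {a} + f {b} + f {a, b} := by
  rw [sum_powerset_insert (by simpa), ← insert_empty (a := b), sum_powerset_insert (notMem_empty _),
    powerset_empty, sum_singleton, sum_singleton, sum_powerset_insert (notMem_empty _),
    powerset_empty, sum_singleton, sum_singleton, insert_empty, insert_empty]
  abel

theorem sum_filter_le_add_eq {α M : Type*} [LinearOrder α] [AddCommMonoid M]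
    (s : Finset α) (F : Finset α → M) :
    ∑ a ∈ s, F (s.filter (· ≤ a)) + F ∅ = ∑ a ∈ s, F (s.filter (· < a)) + F s := by
  induction s using Finset.induction_on_max with
  | empty => simp
  | insert a s hlt ih =>
    have ha : a ∉ s := fun h => lt_irrefl a (hlt a h)
    have hle : ∀ x ∈ s, (insert a s).filter (· ≤ x) = s.filter (· ≤ x) := fun x hx => by
      rw [filter_insert, if_neg (not_le.2 (hlt x hx))]
    have hlt' : ∀ x ∈ s, (insert a s).filter (· < x) = s.filter (· < x) := fun x hx => by
      rw [filter_insert, if_neg (not_lt.2 (hlt x hx).le)]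
    have htop : (insert a s).filter (· ≤ a) = insert a s :=
      filter_true_of_mem fun x hx => by
        rcases mem_insert.1 hx with rfl | hx
        exacts [le_rfl, (hlt x hx).le]
    have hbot : (insert a s).filter (· < a) = s := by
      rw [filter_insert, if_neg (lt_irrefl a), filter_true_of_mem hlt]
    rw [sum_insert ha, sum_insert ha, htop, hbot, sum_congr rfl fun x hx => congrArg F (hle x hx),
      sum_congr rfl fun x hx => congrArg F (hlt' x hx), add_assoc, ih]
    abel

end Finset

lemma mem_peaks {l : List ℕ} {i : ℕ} :
    i ∈ peaks l ↔ 2 ≤ i ∧ i < l.length ∧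
      l.getD (i - 2) 0 < l.getD (i - 1) 0 ∧ l.getD i 0 < l.getD (i - 1) 0 := by
  simp only [peaks, mem_filter, mem_Icc]
  omega

lemma two_le_of_mem_peaks {l : List ℕ} {i : ℕ} (h : i ∈ peaks l) : 2 ≤ i :=
  (mem_peaks.1 h).1

lemma add_one_notMem_peaks {l : List ℕ} {i : ℕ} (h : i ∈ peaks l) : i + 1 ∉ peaks l := by
  intro h'
  rw [mem_peaks] at h h'
  simp only [Nat.add_sub_cancel, show i + 1 - 2 = i - 1 by omega] at h'
  omega

lemma getD_lt_of_forall_lt {l : List ℕ} {m k : ℕ} (hl : ∀ x ∈ l, x < m) (hk : k < l.length) :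
    l.getD k 0 < m := by
  rw [List.getD_eq_getElem _ _ hk]
  exact hl _ (List.getElem_mem hk)

lemma mem_Shat {S : Finset ℕ} {k i : ℕ} :
    i ∈ Shat S k ↔ (i ∈ S ∧ i < k) ∨ (i + 1 ∈ S ∧ k ≤ i) := by
  simp only [Shat, mem_union, mem_filter, mem_image]
  constructor
  · rintro (h | ⟨s, ⟨hs, hks⟩, rfl⟩)
    · exact Or.inl h
    · exact Or.inr ⟨by rwa [Nat.sub_add_cancel (by omega)], by omega⟩
  · rintro (h | ⟨h, hk⟩)
    · exact Or.inl h
    · exact Or.inr ⟨i + 1, ⟨h, by omega⟩, rfl⟩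

lemma Sdown_eq_insert_Shat {S : Finset ℕ} {k : ℕ} (hk : k ∈ S) :
    Sdown S k = insert (k - 1) (Shat S k) := by
  ext i
  simp only [Sdown, Shat, mem_insert, mem_union, mem_filter, mem_image]
  grind

lemma Sdown_add_one_eq_insert_Shat {S : Finset ℕ} {k : ℕ} (hk : k ∈ S) :
    Sdown S (k + 1) = insert k (Shat S k) := by
  ext i
  simp only [Sdown, Shat, mem_insert, mem_union, mem_filter, mem_image]
  grind

lemma Sdown_zero (S : Finset ℕ) : Sdown S 0 = S.image (· - 1) := by
  simp [Sdown]

lemma Sdown_eq_filter_lt (S : Finset ℕ) (k : ℕ) :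
    Sdown S k = S.filter (· < k) ∪ (S \ S.filter (· < k)).image (· - 1) := by
  rw [Sdown, ← filter_not]
  simp only [not_lt]

section InsertMax

variable {τ : List ℕ} {m : ℕ}

lemma mem_peaks_insertIdx (hτ : ∀ x ∈ τ, x < m) {j : ℕ} (hj : j ≤ τ.length) (i : ℕ) :
    i ∈ peaks (τ.insertIdx j m) ↔
      (i ∈ peaks τ ∧ i < j) ∨ (i = j + 1 ∧ 0 < j ∧ j < τ.length) ∨
        (i - 1 ∈ peaks τ ∧ j + 3 ≤ i) := by
  have h1 : j - 1 < τ.length → τ.getD (j - 1) 0 < m := getD_lt_of_forall_lt hτ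
  have h2 : j < τ.length → τ.getD j 0 < m := getD_lt_of_forall_lt hτ
  simp only [mem_peaks, List.getD_insertIdx hj, List.length_insertIdx_of_le_length hj]
  split_ifs <;> grind

lemma peaks_insertIdx_zero (hτ : ∀ x ∈ τ, x < m) :
    peaks (τ.insertIdx 0 m) = (peaks τ).image (· + 1) := by
  ext i
  rw [mem_peaks_insertIdx hτ (Nat.zero_le _), mem_image]
  constructor
  · rintro (⟨-, h⟩ | ⟨-, h, -⟩ | ⟨h, hi⟩)
    · omega
    · omega
    · exact ⟨i - 1, h, by omega⟩
  · rintro ⟨t, ht, rfl⟩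
    have := two_le_of_mem_peaks ht
    exact Or.inr (Or.inr ⟨by simpa using ht, by omega⟩)

lemma peaks_insertIdx_length (hτ : ∀ x ∈ τ, x < m) :
    peaks (τ.insertIdx τ.length m) = peaks τ := by
  ext i
  rw [mem_peaks_insertIdx hτ le_rfl]
  have hlt : ∀ t ∈ peaks τ, t < τ.length := fun t ht => (mem_peaks.1 ht).2.1
  constructor
  · rintro (⟨h, -⟩ | ⟨-, -, h⟩ | ⟨h, hi⟩)
    · exact h
    · omega
    · have := hlt _ h
      omega
  · exact fun h => Or.inl ⟨h, hlt i h⟩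

lemma add_one_mem_peaks_insertIdx (hτ : ∀ x ∈ τ, x < m) {j : ℕ} (h0 : 0 < j)
    (hj : j < τ.length) : j + 1 ∈ peaks (τ.insertIdx j m) :=
  (mem_peaks_insertIdx hτ hj.le _).2 (Or.inr (Or.inl ⟨rfl, h0, hj⟩))

lemma peaks_insertIdx_eq_iff (hτ : ∀ x ∈ τ, x < m) {S : Finset ℕ} {j : ℕ} (h0 : 0 < j)
    (hj : j < τ.length) (hS : j + 1 ∈ S) :
    peaks (τ.insertIdx j m) = S ↔ peaks τ \ {j, j + 1} = Shat S (j + 1) := by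
  simp only [Finset.ext_iff, mem_peaks_insertIdx hτ hj.le, mem_sdiff, mem_insert, mem_singleton,
    mem_Shat]
  constructor
  · intro H i
    have := H i
    have := H (i + 1)
    grind
  · intro H i
    have := H i
    have := H (i - 1)
    grind

end InsertMax

def permsOf (n : ℕ) : Finset (List ℕ) := (List.range' 1 n).permutations.toFinset

lemma mem_permsOf {n : ℕ} {l : List ℕ} : l ∈ permsOf n ↔ IsPermOf n l := by
  rw [permsOf, List.mem_toFinset, List.mem_permutations, IsPermOf]

lemma length_of_mem_permsOf {n : ℕ} {l : List ℕ} (h : l ∈ permsOf n) : l.length = n := by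
  simpa using (mem_permsOf.1 h).length_eq

lemma forall_lt_of_mem_permsOf {n : ℕ} {l : List ℕ} (h : l ∈ permsOf n) : ∀ x ∈ l, x < n + 1 := by
  intro x hx
  have := (mem_permsOf.1 h).mem_iff.1 hx
  rw [List.mem_range'_1] at this
  omega

lemma numPerms_eq_card (n : ℕ) (S : Finset ℕ) :
    numPerms n S = #{l ∈ permsOf n | peaks l = S} := by
  rw [numPerms, ← Set.ncard_coe_finset]
  congr 1
  ext l
  simp [mem_permsOf]

lemma numPerms_eq_zero_of_mem_of_add_one_mem {n i : ℕ} {T : Finset ℕ} (hi : i ∈ T)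
    (hi' : i + 1 ∈ T) : numPerms n T = 0 := by
  rw [numPerms_eq_card, card_eq_zero, filter_eq_empty_iff]
  rintro l - rfl
  exact add_one_notMem_peaks hi hi'

/-- The number of permutations of `{1, …, q + 1}` with peak set `S` in which `q + 1` stands at
(0-based) position `j`, counted through the permutation of `{1, …, q}` left when it is deleted. -/
noncomputable def numPermsMaxAt (q : ℕ) (S : Finset ℕ) (j : ℕ) : ℕ :=
  #{τ ∈ permsOf q | peaks (τ.insertIdx j (q + 1)) = S}

lemma numPerms_succ_eq_sum (q : ℕ) (S : Finset ℕ) :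
    numPerms (q + 1) S = ∑ j ∈ range (q + 1), numPermsMaxAt q S j := by
  have hperm : (List.range' 1 (q + 1)).Perm ((q + 1) :: List.range' 1 q) := by
    rw [List.range'_1_concat, Nat.add_comm 1 q]
    exact List.perm_append_singleton _ _
  have hnotMem : q + 1 ∉ List.range' 1 q := by
    rw [List.mem_range'_1]
    omega
  rw [numPerms_eq_card, permsOf, List.toFinset_eq_of_perm _ _ hperm.permutations,
    card_filter_permutations_cons hnotMem, List.length_range']
  rfl

lemma numPermsMaxAt_zero (q : ℕ) {S : Finset ℕ} (hS : 0 ∉ S) :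
    numPermsMaxAt q S 0 = numPerms q (Sdown S 0) := by
  rw [numPermsMaxAt, numPerms_eq_card, Sdown_zero]
  refine congrArg card (filter_congr fun τ hτ => ?_)
  rw [peaks_insertIdx_zero (forall_lt_of_mem_permsOf hτ)]
  constructor
  · rintro rfl
    simp [image_image, Function.comp_def]
  · rintro h
    rw [h, image_image]
    refine (image_congr fun s hs => ?_).trans image_id
    have : s ≠ 0 := fun h => hS (h ▸ hs)
    simp only [Function.comp_apply, id]
    omega

lemma numPermsMaxAt_self (q : ℕ) (S : Finset ℕ) : numPermsMaxAt q S q = numPerms q S := by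
  rw [numPermsMaxAt, numPerms_eq_card]
  refine congrArg card (filter_congr fun τ hτ => ?_)
  have h := peaks_insertIdx_length (forall_lt_of_mem_permsOf hτ)
  rw [length_of_mem_permsOf hτ] at h
  rw [h]

lemma numPermsMaxAt_of_notMem {q j : ℕ} {S : Finset ℕ} (h0 : 0 < j) (hj : j < q)
    (hS : j + 1 ∉ S) : numPermsMaxAt q S j = 0 := by
  rw [numPermsMaxAt, card_eq_zero, filter_eq_empty_iff]
  rintro τ hτ rfl
  exact hS (add_one_mem_peaks_insertIdx (forall_lt_of_mem_permsOf hτ) h0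
    (by rwa [length_of_mem_permsOf hτ]))

lemma numPermsMaxAt_of_mem {q j : ℕ} {S : Finset ℕ} (h0 : 0 < j) (hj : j < q)
    (hS : j + 1 ∈ S) (hS0 : j ∉ S) (hS2 : j + 2 ∉ S) :
    numPermsMaxAt q S j =
      numPerms q (Shat S (j + 1)) + numPerms q (Sdown S (j + 1)) + numPerms q (Sdown S (j + 2)) := by
  have hdisj : Disjoint (Shat S (j + 1)) {j, j + 1} := by
    simp [disjoint_insert_right, mem_Shat, hS0, hS2]
  rw [numPermsMaxAt, filter_congr fun τ hτ => peaks_insertIdx_eq_iff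
      (forall_lt_of_mem_permsOf hτ) h0 (by rwa [length_of_mem_permsOf hτ]) hS,
    card_filter_sdiff_eq _ _ hdisj, sum_powerset_pair (by simp)]
  simp only [← numPerms_eq_card, union_empty, union_insert, union_singleton]
  rw [numPerms_eq_zero_of_mem_of_add_one_mem (mem_insert_self j _)
    (mem_insert_of_mem (mem_insert_self _ _)), Sdown_eq_insert_Shat hS,
    Sdown_add_one_eq_insert_Shat hS, Nat.add_sub_cancel, add_zero]

lemma sum_Ico_numPermsMaxAt {q : ℕ} {S : Finset ℕ} (hS2 : ∀ s ∈ S, 2 ≤ s)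
    (hSq : ∀ s ∈ S, s ≤ q) (hadj : ∀ s ∈ S, s + 1 ∉ S) :
    ∑ j ∈ Ico 1 q, numPermsMaxAt q S j =
      ∑ p ∈ S, (numPerms q (Shat S p) + numPerms q (Sdown S p) + numPerms q (Sdown S (p + 1))) := by
  set g : ℕ → ℕ := fun p =>
    numPerms q (Shat S p) + numPerms q (Sdown S p) + numPerms q (Sdown S (p + 1))
  have hterm : ∀ j ∈ Ico 1 q, numPermsMaxAt q S j = if j + 1 ∈ S then g (j + 1) else 0 := by
    intro j hj
    rw [mem_Ico] at hj
    split_ifs with hS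
    · exact numPermsMaxAt_of_mem hj.1 hj.2 hS (fun h => hadj j h hS) (hadj (j + 1) hS)
    · exact numPermsMaxAt_of_notMem hj.1 hj.2 hS
  rw [sum_congr rfl hterm, sum_Ico_add' (fun p => if p ∈ S then g p else 0), sum_ite_mem,
    inter_eq_right.2 fun s hs => mem_Ico.2 ⟨hS2 s hs, Nat.lt_add_one_of_le (hSq s hs)⟩]

lemma sum_numPerms_Sdown_add_one (q : ℕ) (S : Finset ℕ) :
    ∑ p ∈ S, numPerms q (Sdown S (p + 1)) + numPerms q (Sdown S 0) =
      ∑ p ∈ S, numPerms q (Sdown S p) + numPerms q S := by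
  simpa [Sdown_eq_filter_lt, Nat.lt_add_one_iff] using
    sum_filter_le_add_eq S fun A => numPerms q (A ∪ (S \ A).image (· - 1))

theorem stmt_8 (n : ℕ) (S : Finset ℕ) (hS : S.Nonempty) (hadm : Admissible (n + 1) S)
    (q : ℕ) (hq : S.max' hS ≤ q) :
    numPerms (q + 1) S =
      2 * numPerms q S + 2 * ∑ i ∈ S, numPerms q (Sdown S i)
        + ∑ i ∈ S, numPerms q (Shat S i) := by
  obtain ⟨l, -, hl⟩ := hadm
  have hS2 : ∀ s ∈ S, 2 ≤ s := fun s hs => two_le_of_mem_peaks (hl ▸ hs)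
  have hadj : ∀ s ∈ S, s + 1 ∉ S := fun s hs => hl ▸ add_one_notMem_peaks (hl ▸ hs)
  have hSq : ∀ s ∈ S, s ≤ q := fun s hs => (le_max' S s hs).trans hq
  have hq0 : 0 < q := by
    obtain ⟨s, hs⟩ := hS
    linarith [hS2 s hs, hSq s hs]
  rw [numPerms_succ_eq_sum, sum_range_succ, sum_range_eq_add_Ico _ hq0,
    numPermsMaxAt_zero q fun h => by linarith [hS2 0 h], numPermsMaxAt_self,
    sum_Ico_numPermsMaxAt hS2 hSq hadj, sum_add_distrib, sum_add_distrib]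
  have := sum_numPerms_Sdown_add_one q S
  omega
end

section
/- For n ≥ 4, |P_{{2,4}}(n)| satisfies the recurrence |P_{{2,4}}(n+1)| = 2|P_{{2,4}}(n)| + 2|P_{{2,3}}(n)| + 2|P_{{1,3}}(n)| + |P_{{3}}(n)| + |P_{{2}}(n)|, where |P_{{2,3}}(n)| = |P_{{1,3}}(n)| = 0 since these sets are not admissible. -/
namespace Aux
open List

lemma mem_peaks {l : List ℕ} {i : ℕ} :
    i ∈ peaks l ↔ 2 ≤ i ∧ i ≤ l.length - 1 ∧
      l.getD (i - 2) 0 < l.getD (i - 1) 0 ∧ l.getD i 0 < l.getD (i - 1) 0 := by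
  simp [peaks, Finset.mem_filter, Finset.mem_Icc, and_assoc]

lemma length_of_perm {n : ℕ} {l : List ℕ} (h : IsPermOf n l) : l.length = n := by
  simpa using h.length_eq

lemma nodup_of_perm {n : ℕ} {l : List ℕ} (h : IsPermOf n l) : l.Nodup :=
  h.nodup_iff.mpr List.nodup_range'

lemma mem_iff_of_perm {n : ℕ} {l : List ℕ} (h : IsPermOf n l) {x : ℕ} :
    x ∈ l ↔ 1 ≤ x ∧ x ≤ n := by
  rw [h.mem_iff, List.mem_range'_1]; omega

lemma getD_le {n : ℕ} {l : List ℕ} (h : IsPermOf n l) (j : ℕ) : l.getD j 0 ≤ n := by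
  rcases lt_or_ge j l.length with hj | hj
  · rw [List.getD_eq_getElem _ _ hj]
    exact ((mem_iff_of_perm h).mp (l.getElem_mem hj)).2
  · rw [List.getD_eq_default _ _ hj]; omega

lemma not_adjacent_peaks {l : List ℕ} {i : ℕ} (h1 : i ∈ peaks l) (h2 : i + 1 ∈ peaks l) :
    False := by
  rw [mem_peaks] at h1 h2
  have e1 : i + 1 - 2 = i - 1 := by omega
  have e2 : i + 1 - 1 = i := by omega
  rw [e1, e2] at h2
  omega

lemma numPerms_23 (n : ℕ) : numPerms n {2, 3} = 0 := by
  have : {l : List ℕ | IsPermOf n l ∧ peaks l = {2, 3}} = ∅ := by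
    ext l
    simp only [Set.mem_setOf_eq, Set.mem_empty_iff_false, iff_false, not_and]
    intro _ hp
    have h2 : 2 ∈ peaks l := by rw [hp]; simp
    have h3 : 3 ∈ peaks l := by rw [hp]; simp
    exact not_adjacent_peaks h2 h3
  rw [numPerms, this, Set.ncard_empty]

lemma numPerms_13 (n : ℕ) : numPerms n {1, 3} = 0 := by
  have : {l : List ℕ | IsPermOf n l ∧ peaks l = {1, 3}} = ∅ := by
    ext l
    simp only [Set.mem_setOf_eq, Set.mem_empty_iff_false, iff_false, not_and]
    intro _ hp
    have h1 : 1 ∈ peaks l := by rw [hp]; simp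
    rw [mem_peaks] at h1
    omega
  rw [numPerms, this, Set.ncard_empty]

lemma getD_insertIdx {l : List ℕ} {p : ℕ} (hp : p ≤ l.length) (v j : ℕ) :
    (l.insertIdx p v).getD j 0 =
      if j < p then l.getD j 0 else if j = p then v else l.getD (j - 1) 0 := by
  have hlen : (l.insertIdx p v).length = l.length + 1 := List.length_insertIdx_of_le_length hp _
  rcases lt_trichotomy j p with hj | hj | hj
  · rw [if_pos hj]
    have hjl : j < l.length := lt_of_lt_of_le hj hp
    rw [List.getD_eq_getElem _ _ (by omega : j < (l.insertIdx p v).length),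
      List.getD_eq_getElem _ _ hjl]
    exact List.getElem_insertIdx_of_lt hj _
  · subst hj
    rw [if_neg (lt_irrefl _), if_pos rfl]
    rw [List.getD_eq_getElem _ _ (by omega : j < (l.insertIdx j v).length)]
    exact List.getElem_insertIdx_self _
  · rw [if_neg (by omega), if_neg (by omega)]
    rcases lt_or_ge (j - 1) l.length with hjl | hjl
    · rw [List.getD_eq_getElem _ _ (by omega : j < (l.insertIdx p v).length),
        List.getD_eq_getElem _ _ hjl]
      exact List.getElem_insertIdx_of_gt hj _
    · rw [List.getD_eq_default _ _ (by omega), List.getD_eq_default _ _ hjl]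

lemma insertIdx_take_drop (v : ℕ) : ∀ (p : ℕ) (l : List ℕ), p ≤ l.length →
    l.insertIdx p v = l.take p ++ v :: l.drop p
  | 0, l, _ => rfl
  | p + 1, [], h => by simp at h
  | p + 1, a :: l, h => by
      simp only [List.insertIdx_succ_cons, List.take_succ_cons, List.drop_succ_cons,
        List.cons_append]
      rw [insertIdx_take_drop v p l (by simpa using h)]

lemma eq_insertIdx_eraseIdx {l : List ℕ} {i : ℕ} {v : ℕ} (hi : i < l.length)
    (hv : l.getD i 0 = v) : l = (l.eraseIdx i).insertIdx i v := by
  have hlen : (l.eraseIdx i).length = l.length - 1 := List.length_eraseIdx_of_lt hi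
  rw [insertIdx_take_drop v i _ (by omega), List.eraseIdx_eq_take_drop_succ,
    List.take_append_of_le_length (by rw [List.length_take]; omega),
    List.take_take, min_self]
  have hd := List.drop_left (l₁ := List.take i l) (l₂ := List.drop (i + 1) l)
  rw [List.length_take, min_eq_left (by omega : i ≤ l.length)] at hd
  rw [hd]
  rw [List.getD_eq_getElem _ _ hi] at hv
  rw [← hv, List.getElem_cons_drop, List.take_append_drop]

lemma mem_peaks_insertIdx {n : ℕ} {l : List ℕ} (h : IsPermOf n l) {p : ℕ} (hp : p ≤ n) (i : ℕ) :
    i ∈ peaks (l.insertIdx p (n + 1)) ↔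
      (i < p ∧ i ∈ peaks l) ∨ (i = p + 1 ∧ 2 ≤ i ∧ i ≤ n) ∨ (p + 3 ≤ i ∧ i - 1 ∈ peaks l) := by
  have hl : l.length = n := length_of_perm h
  have hp' : p ≤ l.length := by omega
  have hlen : (l.insertIdx p (n + 1)).length = n + 1 := by
    rw [List.length_insertIdx_of_le_length hp' _, hl]
  have h0 := getD_le h (i - 3)
  have h1 := getD_le h (i - 2)
  have h2 := getD_le h (i - 1)
  have h3 := getD_le h i
  simp only [mem_peaks, hlen, hl, getD_insertIdx hp', Nat.sub_sub, Nat.reduceAdd]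
  split_ifs <;> omega


lemma peaks_insert_last {n : ℕ} {l : List ℕ} (h : IsPermOf n l) :
    peaks (l.insertIdx n (n + 1)) = peaks l := by
  ext i
  rw [mem_peaks_insertIdx h le_rfl]
  constructor
  · rintro (⟨_, hi⟩ | ⟨rfl, h2, h3⟩ | ⟨hge, hi⟩)
    · exact hi
    · omega
    · exfalso
      have h2 := (mem_peaks.mp hi).2.1
      rw [length_of_perm h] at h2
      omega
  · intro hi
    have h2 := mem_peaks.mp hi
    rw [length_of_perm h] at h2
    exact Or.inl ⟨by omega, hi⟩

lemma peaks_insert3 {n : ℕ} {l : List ℕ} (h : IsPermOf n l) (hn : 4 ≤ n) :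
    peaks (l.insertIdx 3 (n + 1)) = {2, 4} ↔ (peaks l = {2} ∨ peaks l = {2, 4}) := by
  constructor
  · intro hP
    have key : ∀ i, ((i < 3 ∧ i ∈ peaks l) ∨ (i = 3 + 1 ∧ 2 ≤ i ∧ i ≤ n)
        ∨ (3 + 3 ≤ i ∧ i - 1 ∈ peaks l)) ↔ (i = 2 ∨ i = 4) := by
      intro i
      rw [← mem_peaks_insertIdx h (by omega), hP]
      simp
    have h2 : 2 ∈ peaks l := by
      rcases (key 2).mpr (Or.inl rfl) with ⟨_, hm⟩ | ⟨hc, _⟩ | ⟨hc, _⟩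
      · exact hm
      · omega
      · omega
    have hk : ∀ k, 5 ≤ k → k ∉ peaks l := by
      intro k hk5 hkm
      have hm1 : (k + 1) - 1 ∈ peaks l := by simpa using hkm
      rcases (key (k + 1)).mp (Or.inr (Or.inr ⟨by omega, hm1⟩)) with hc | hc <;> omega
    have h3 : 3 ∉ peaks l := by
      intro hm
      have : (3 : ℕ) = 2 + 1 := by norm_num
      rw [this] at hm
      exact not_adjacent_peaks h2 hm
    by_cases h4 : 4 ∈ peaks l
    · right
      ext i
      simp only [Finset.mem_insert, Finset.mem_singleton]
      constructor
      · intro him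
        have hb := (mem_peaks.mp him).1
        by_contra hne
        push_neg at hne
        have : i = 3 ∨ 5 ≤ i := by omega
        rcases this with rfl | h5
        · exact h3 him
        · exact hk i h5 him
      · rintro (rfl | rfl)
        · exact h2
        · exact h4
    · left
      ext i
      simp only [Finset.mem_singleton]
      constructor
      · intro him
        have hb := (mem_peaks.mp him).1
        by_contra hne
        have : i = 3 ∨ i = 4 ∨ 5 ≤ i := by omega
        rcases this with rfl | rfl | h5
        · exact h3 him
        · exact h4 him
        · exact hk i h5 him
      · rintro rfl
        exact h2
  · intro hP
    ext i
    rw [mem_peaks_insertIdx h (by omega)]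
    rcases hP with hP | hP <;> rw [hP] <;>
      simp only [Finset.mem_insert, Finset.mem_singleton] <;> omega

lemma peaks_insert1 {n : ℕ} {l : List ℕ} (h : IsPermOf n l) (hn : 4 ≤ n) :
    peaks (l.insertIdx 1 (n + 1)) = {2, 4} ↔ peaks l = {3} := by
  constructor
  · intro hP
    have key : ∀ i, ((i < 1 ∧ i ∈ peaks l) ∨ (i = 1 + 1 ∧ 2 ≤ i ∧ i ≤ n)
        ∨ (1 + 3 ≤ i ∧ i - 1 ∈ peaks l)) ↔ (i = 2 ∨ i = 4) := by
      intro i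
      rw [← mem_peaks_insertIdx h (by omega), hP]
      simp
    have h3 : 3 ∈ peaks l := by
      rcases (key 4).mpr (Or.inr rfl) with ⟨hc, _⟩ | ⟨hc, _⟩ | ⟨_, hm⟩
      · omega
      · omega
      · simpa using hm
    have hk : ∀ k, 4 ≤ k → k ∉ peaks l := by
      intro k hk4 hkm
      have hm1 : (k + 1) - 1 ∈ peaks l := by simpa using hkm
      rcases (key (k + 1)).mp (Or.inr (Or.inr ⟨by omega, hm1⟩)) with hc | hc <;> omega
    have h2 : 2 ∉ peaks l := by
      intro hm
      have : (3 : ℕ) = 2 + 1 := by norm_num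
      rw [this] at h3
      exact not_adjacent_peaks hm h3
    ext i
    simp only [Finset.mem_singleton]
    constructor
    · intro him
      have hb := (mem_peaks.mp him).1
      by_contra hne
      have : i = 2 ∨ 4 ≤ i := by omega
      rcases this with rfl | h5
      · exact h2 him
      · exact hk i h5 him
    · rintro rfl
      exact h3
  · intro hP
    ext i
    rw [mem_peaks_insertIdx h (by omega), hP]
    simp only [Finset.mem_insert, Finset.mem_singleton]
    omega

lemma finite_perm_set (n : ℕ) (P : List ℕ → Prop) :
    {l : List ℕ | IsPermOf n l ∧ P l}.Finite := by
  apply Set.Finite.subset (List.permutations (List.range' 1 n)).toFinset.finite_toSet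
  intro l hl
  simp only [Finset.coe_sort_coe, List.mem_toFinset, List.mem_permutations, Finset.mem_coe]
  exact hl.1

lemma perm_insert {n : ℕ} {l : List ℕ} (h : IsPermOf n l) {p : ℕ} (hp : p ≤ n) :
    IsPermOf (n + 1) (l.insertIdx p (n + 1)) := by
  have hl : l.length = n := length_of_perm h
  have h1 : l.insertIdx p (n + 1) ~ (n + 1) :: l := List.perm_insertIdx _ _ (by omega)
  have h2 : List.range' 1 (n + 1) ~ (n + 1) :: List.range' 1 n := by
    rw [List.range'_concat]
    have : 1 + 1 * n = n + 1 := by omega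
    rw [this]
    exact List.perm_append_comm.trans (by rfl)
  exact h1.trans ((h.cons (n + 1)).trans h2.symm)

lemma e_eq_image {n p : ℕ} (hp : p ≤ n) (C : List ℕ → Prop)
    (hC : ∀ l, IsPermOf n l → (peaks (l.insertIdx p (n + 1)) = {2, 4} ↔ C l)) :
    {l' : List ℕ | IsPermOf (n + 1) l' ∧ peaks l' = {2, 4} ∧ l'.getD p 0 = n + 1}
      = (fun l => l.insertIdx p (n + 1)) '' {l : List ℕ | IsPermOf n l ∧ C l} := by
  ext l'
  simp only [Set.mem_setOf_eq, Set.mem_image]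
  constructor
  · rintro ⟨hperm, hpk, hgd⟩
    have hlen : l'.length = n + 1 := length_of_perm hperm
    have hplt : p < l'.length := by omega
    have heq := eq_insertIdx_eraseIdx hplt hgd
    have hL : (l'.eraseIdx p).length = n := by
      rw [List.length_eraseIdx_of_lt hplt]; omega
    have hLperm : IsPermOf n (l'.eraseIdx p) := by
      have h1 : l' ~ (n + 1) :: l'.eraseIdx p := by
        conv_lhs => rw [heq]
        exact List.perm_insertIdx _ _ (by omega)
      have h2 : List.range' 1 (n + 1) ~ (n + 1) :: List.range' 1 n := by
        rw [List.range'_concat]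
        have : 1 + 1 * n = n + 1 := by omega
        rw [this]
        exact List.perm_append_comm.trans (by rfl)
      exact ((h1.symm.trans hperm).trans h2).cons_inv
    refine ⟨l'.eraseIdx p, ⟨hLperm, ?_⟩, heq.symm⟩
    apply (hC _ hLperm).mp
    rw [← heq]
    exact hpk
  · rintro ⟨l, ⟨hperm, hc⟩, rfl⟩
    have hl : l.length = n := length_of_perm hperm
    refine ⟨perm_insert hperm hp, (hC l hperm).mpr hc, ?_⟩
    rw [getD_insertIdx (by omega)]
    simp

lemma idx_classify {n : ℕ} (hn : 4 ≤ n) {l' : List ℕ} (hperm : IsPermOf (n + 1) l')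
    (hpk : peaks l' = {2, 4}) {i : ℕ} (hi : i < n + 1) (hM : l'.getD i 0 = n + 1) :
    i = 1 ∨ i = 3 ∨ i = n := by
  by_contra hcon
  push_neg at hcon
  have hlen := length_of_perm hperm
  have hother : ∀ j, j ≠ i → l'.getD j 0 < n + 1 := by
    intro j hj
    rcases lt_or_ge j l'.length with hjl | hjl
    · rcases lt_or_eq_of_le (getD_le hperm j) with h | h
      · exact h
      · exfalso
        apply hj
        have hnd := nodup_of_perm hperm
        rw [List.getD_eq_getElem _ _ hjl] at h
        rw [List.getD_eq_getElem _ _ (by omega)] at hM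
        exact (hnd.getElem_inj_iff).mp (h.trans hM.symm)
    · rw [List.getD_eq_default _ _ hjl]; omega
  have hcase : i = 0 ∨ (1 ≤ i ∧ i + 1 ≤ n) := by omega
  rcases hcase with rfl | ⟨hi1, hi2⟩
  · have h2 : 2 ∈ peaks l' := by rw [hpk]; simp
    rw [mem_peaks] at h2
    have ho := hother 1 (by omega)
    simp only [show (2:ℕ) - 2 = 0 from rfl, show (2:ℕ) - 1 = 1 from rfl] at h2
    omega
  · have hmem : i + 1 ∈ peaks l' := by
      rw [mem_peaks]
      refine ⟨by omega, by rw [hlen]; omega, ?_, ?_⟩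
      · have e1 : i + 1 - 2 = i - 1 := by omega
        have e2 : i + 1 - 1 = i := by omega
        rw [e1, e2, hM]
        exact hother (i - 1) (by omega)
      · have e2 : i + 1 - 1 = i := by omega
        rw [e2, hM]
        exact hother (i + 1) (by omega)
    rw [hpk] at hmem
    simp only [Finset.mem_insert, Finset.mem_singleton] at hmem
    omega

end Aux

theorem stmt_18 (n : ℕ) (hn : 4 ≤ n) :
    numPerms (n + 1) {2, 4} =
        2 * numPerms n {2, 4} + 2 * numPerms n {2, 3} + 2 * numPerms n {1, 3}
          + numPerms n {3} + numPerms n {2} ∧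
      numPerms n {2, 3} = 0 ∧ numPerms n {1, 3} = 0 := by
  refine ⟨?_, Aux.numPerms_23 n, Aux.numPerms_13 n⟩
  rw [Aux.numPerms_23, Aux.numPerms_13]
  -- the three pieces
  set E : ℕ → Set (List ℕ) :=
    fun p => {l' : List ℕ | IsPermOf (n + 1) l' ∧ peaks l' = {2, 4} ∧ l'.getD p 0 = n + 1}
    with hE
  have hdisj : ∀ p q, p < n + 1 → q < n + 1 → p ≠ q → Disjoint (E p) (E q) := by
    intro p q hp hq hpq
    rw [Set.disjoint_left]
    rintro l' ⟨hperm, _, hgp⟩ ⟨_, _, hgq⟩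
    apply hpq
    have hlen := Aux.length_of_perm hperm
    have hnd := Aux.nodup_of_perm hperm
    rw [List.getD_eq_getElem _ _ (by omega)] at hgp
    rw [List.getD_eq_getElem _ _ (by omega)] at hgq
    exact (hnd.getElem_inj_iff).mp (hgp.trans hgq.symm)
  have hcover : {l' : List ℕ | IsPermOf (n + 1) l' ∧ peaks l' = {2, 4}}
      = E 1 ∪ E 3 ∪ E n := by
    ext l'
    simp only [hE, Set.mem_setOf_eq, Set.mem_union]
    constructor
    · rintro ⟨hperm, hpk⟩
      have hmem : n + 1 ∈ l' := (Aux.mem_iff_of_perm hperm).mpr (by omega)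
      rw [List.mem_iff_getElem] at hmem
      obtain ⟨i, hilt, hig⟩ := hmem
      have hlen := Aux.length_of_perm hperm
      have hgd : l'.getD i 0 = n + 1 := by
        rw [List.getD_eq_getElem _ _ hilt]; exact hig
      rcases Aux.idx_classify hn hperm hpk (by omega) hgd with rfl | rfl | rfl
      · exact Or.inl (Or.inl ⟨hperm, hpk, hgd⟩)
      · exact Or.inl (Or.inr ⟨hperm, hpk, hgd⟩)
      · exact Or.inr ⟨hperm, hpk, hgd⟩
    · rintro ((⟨h1, h2, _⟩ | ⟨h1, h2, _⟩) | ⟨h1, h2, _⟩) <;> exact ⟨h1, h2⟩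
  have hfin : ∀ p, (E p).Finite := by
    intro p
    exact Aux.finite_perm_set (n + 1) (fun l' => peaks l' = {2, 4} ∧ l'.getD p 0 = n + 1)
  -- cardinalities of the pieces
  have hE1 : (E 1).ncard = numPerms n {3} := by
    have heq : E 1 = (fun l => l.insertIdx 1 (n + 1)) ''
        {l : List ℕ | IsPermOf n l ∧ peaks l = {3}} :=
      Aux.e_eq_image (by omega : 1 ≤ n) (fun l => peaks l = {3})
        (fun l hl => Aux.peaks_insert1 hl hn)
    rw [heq, Set.ncard_image_of_injOn ((List.insertIdx_injective 1 (n + 1)).injOn)]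
    rfl
  have hEn : (E n).ncard = numPerms n {2, 4} := by
    have heq : E n = (fun l => l.insertIdx n (n + 1)) ''
        {l : List ℕ | IsPermOf n l ∧ peaks l = {2, 4}} :=
      Aux.e_eq_image (le_refl n) (fun l => peaks l = {2, 4})
        (fun l hl => by rw [Aux.peaks_insert_last hl])
    rw [heq, Set.ncard_image_of_injOn ((List.insertIdx_injective n (n + 1)).injOn)]
    rfl
  have hE3 : (E 3).ncard = numPerms n {2} + numPerms n {2, 4} := by
    have heq : E 3 = (fun l => l.insertIdx 3 (n + 1)) ''
        {l : List ℕ | IsPermOf n l ∧ (peaks l = {2} ∨ peaks l = {2, 4})} :=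
      Aux.e_eq_image (by omega : 3 ≤ n) (fun l => peaks l = {2} ∨ peaks l = {2, 4})
        (fun l hl => Aux.peaks_insert3 hl hn)
    rw [heq, Set.ncard_image_of_injOn ((List.insertIdx_injective 3 (n + 1)).injOn)]
    have hsplit : {l : List ℕ | IsPermOf n l ∧ (peaks l = {2} ∨ peaks l = {2, 4})}
        = {l : List ℕ | IsPermOf n l ∧ peaks l = {2}}
          ∪ {l : List ℕ | IsPermOf n l ∧ peaks l = {2, 4}} := by
      ext l; simp only [Set.mem_setOf_eq, Set.mem_union]; tauto
    have hdisj2 : Disjoint {l : List ℕ | IsPermOf n l ∧ peaks l = {2}}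
        {l : List ℕ | IsPermOf n l ∧ peaks l = {2, 4}} := by
      rw [Set.disjoint_left]
      rintro l ⟨_, h2⟩ ⟨_, h24⟩
      rw [h2] at h24
      have h4 : (4 : ℕ) ∈ ({2} : Finset ℕ) := by rw [h24]; simp
      simp at h4
    rw [hsplit, Set.ncard_union_eq hdisj2 (Aux.finite_perm_set n _) (Aux.finite_perm_set n _)]
    rfl
  -- put it together
  have hcalc : numPerms (n + 1) {2, 4} = (E 1).ncard + (E 3).ncard + (E n).ncard := by
    rw [numPerms, hcover]
    rw [Set.ncard_union_eq (by
        rw [Set.disjoint_union_left]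
        exact ⟨hdisj 1 n (by omega) (by omega) (by omega),
          hdisj 3 n (by omega) (by omega) (by omega)⟩)
      ((hfin 1).union (hfin 3)) (hfin n)]
    rw [Set.ncard_union_eq (hdisj 1 3 (by omega) (by omega) (by omega)) (hfin 1) (hfin 3)]
  rw [hcalc, hE1, hE3, hEn]
  ring
end
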